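/- Let M be a nonzero persistence module over ℤⁿ of finite total dimension. Then M admits no free resolution of length strictly less than n: there is no exact sequence 0 → F_m → F_{m−1} → ⋯ → F_1 → F_0 → M → 0 of persistence modules with m < n in which every F_i is free of finite rank (a finite direct sum of modules F(z) with z ∈ ℤⁿ). -/

import Mathlib

/-!
STATEMENT 15: A nonzero persistence module over `ℤⁿ` of finite total dimension admits no
free resolution of length strictly less than `n`.

Persistence modules over `ℤⁿ` are formalized as functors `(Fin n → ℤ) ⥤ ModuleCat k`;
exactness is componentwise.  The free module `F(z)` (for `z ∈ ℤⁿ`) is realized gradewise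
as the submodule `gate k P = {x : k | P ∨ x = 0}` of `k` (which is `k` iff `z ≤ v`), with
the canonical structure maps; a module is free of finite rank iff it is isomorphic to a
finite direct sum of such `F(z)`.  A finite exact sequence
`0 → F_m → ⋯ → F_1 → F_0 → M → 0` is encoded as an `ℕ`-indexed resolution
`⋯ → F_1 → F_0 → M → 0` (exact everywhere) with `F_i = 0` for `i > m`.
-/

open CategoryTheory Limits

attribute [-instance] CategoryTheory.pi

noncomputable instance (k : Type) [Field k] (n : ℕ) :
    HasFiniteBiproducts ((Fin n → ℤ) ⥤ ModuleCat k) :=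
  @Abelian.hasFiniteBiproducts _ _ inferInstance

variable (k : Type) [Field k]

/-- The submodule `{x : k | P ∨ x = 0}` of `k`: it is all of `k` if `P` holds, and `0` otherwise. -/
def gate (P : Prop) : Submodule k k where
  carrier := {x | P ∨ x = 0}
  add_mem' := by
    rintro a b (h | ha) hb
    · exact Or.inl h
    · rcases hb with h | hb
      · exact Or.inl h
      · exact Or.inr (by rw [ha, hb, add_zero])
  zero_mem' := Or.inr rfl
  smul_mem' := by
    rintro c x (h | hx)
    · exact Or.inl h
    · exact Or.inr (by rw [hx, smul_zero])

lemma gate_mono {P Q : Prop} (h : P → Q) : gate k P ≤ gate k Q := fun _ hx => hx.imp h id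

variable (n : ℕ)

/-- The free persistence module `F(z)`, `z ∈ ℤⁿ`:  `F(z)_v = k` if `z ≤ v` and `0`
otherwise, with identity structure maps between nonzero components. -/
def freeF (z : Fin n → ℤ) : (Fin n → ℤ) ⥤ ModuleCat k where
  obj v := ModuleCat.of k (gate k (∀ i, z i ≤ v i))
  map {v w} h := ModuleCat.ofHom (Submodule.inclusion
    (gate_mono k (fun hc i => le_trans (hc i) (leOfHom h i))))
  map_id := fun _ => rfl
  map_comp := fun _ _ => rfl

/-- A persistence module is free of finite rank iff it is isomorphic to a finite direct
sum `⊕_{t=1}^r F(z_t)` with `z_t ∈ ℤⁿ`. -/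
def IsFiniteRankFree (M : (Fin n → ℤ) ⥤ ModuleCat k) : Prop :=
  ∃ (r : ℕ) (z : Fin r → (Fin n → ℤ)),
    Nonempty (M ≅ ⨁ (fun t : Fin r => freeF k n (z t)))


/-!
Choosing bases turns a free resolution into a complex of matrices whose nonzero entries respect
the degrees of the generators; prepending a zero module makes `M` its homology in degree `0`.
Consider such a complex over `ℤⁿ` that is exact above degree `q` and whose homology in degree `q`
has finite nonempty support, and let `c - 1` be the largest last coordinate in that support. For
`w ∈ ℤⁿ⁻¹`, the complex at grade `(w, c - 1)` is a subcomplex of the complex at `(w, c)`, and the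
quotient is the free complex over `ℤⁿ⁻¹` on the generators of last coordinate `c`. By the long
exact homology sequence, this quotient is exact above degree `q + 1` and its homology in degree
`q + 1` again has finite nonempty support. After `n` steps, over `ℤ⁰`, nonzero homology in degree
`q + n` requires a nonzero module in degree `q + n + 1`. For the resolution (`q = 0`, shifted by
one) this gives `n + 1 ≤ m + 1`.
-/

universe u

lemma Function.Exact.surjective_iff_subsingleton {R M N P : Type*} [Ring R]
    [AddCommGroup M] [AddCommGroup N] [AddCommGroup P] [Module R M] [Module R N] [Module R P]
    {f : M →ₗ[R] N} {g : N →ₗ[R] P} (h : Exact f g) (hg : Surjective g) :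
    Surjective f ↔ Subsingleton P := by
  rw [LinearMap.surjective_iff_eq_zero_of_exact h]
  refine ⟨fun h0 => ⟨fun p q => ?_⟩, fun _ => Subsingleton.elim _ _⟩
  obtain ⟨p, rfl⟩ := hg p
  obtain ⟨q, rfl⟩ := hg q
  rw [h0, LinearMap.zero_apply, LinearMap.zero_apply]

lemma Cardinal.finite_setOf_ne_zero_of_sum_lt_aleph0 {ι : Type u} {f : ι → Cardinal.{u}}
    (h : Cardinal.sum f < Cardinal.aleph0) : {i | f i ≠ 0}.Finite := by
  have : Finite (Σ i, (f i).out) := by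
    rw [← Cardinal.lt_aleph0_iff_finite, Cardinal.mk_sigma]
    simpa using h
  refine (Set.finite_range (Sigma.fst : (Σ i, (f i).out) → ι)).subset fun i hi => ?_
  obtain ⟨x⟩ := Cardinal.mk_ne_zero_iff.mp (by rwa [Cardinal.mk_out])
  exact ⟨⟨i, x⟩, rfl⟩

namespace PersistenceModule

open Function
open scoped Matrix

noncomputable section

variable {n}

section LongExactSequence

variable {R : Type*} [Ring R] {X Y Z : ℕ → Type*}
  [∀ i, AddCommGroup (X i)] [∀ i, Module R (X i)] [∀ i, AddCommGroup (Y i)]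
  [∀ i, Module R (Y i)] [∀ i, AddCommGroup (Z i)] [∀ i, Module R (Z i)]
  (dX : ∀ i, X (i + 1) →ₗ[R] X i) (dY : ∀ i, Y (i + 1) →ₗ[R] Y i) (dZ : ∀ i, Z (i + 1) →ₗ[R] Z i)
  (f : ∀ i, X i →ₗ[R] Y i) (g : ∀ i, Y i →ₗ[R] Z i)
  (hf : ∀ i, Injective (f i)) (hg : ∀ i, Surjective (g i)) (hfg : ∀ i, Exact (f i) (g i))
  (hdf : ∀ i x, f i (dX i x) = dY i (f (i + 1) x)) (hdg : ∀ i x, g i (dY i x) = dZ i (g (i + 1) x))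
  (hdY : ∀ i x, dY i (dY (i + 1) x) = 0)

include hf hg hfg hdf hdg hdY

/-- The segment `H_{i+1}(Y) → H_{i+1}(Z) → H_i(X)` of the long exact homology sequence of the
short exact sequence of complexes `0 → X → Y → Z → 0`. -/
lemma exact_quotient_of_exact (i : ℕ) (hY : Exact (dY (i + 2)) (dY (i + 1)))
    (hX : Exact (dX (i + 1)) (dX i)) : Exact (dZ (i + 2)) (dZ (i + 1)) := by
  intro c
  constructor
  · intro hc
    obtain ⟨b, rfl⟩ := hg (i + 2) c
    obtain ⟨a, ha⟩ := (hfg (i + 1) _).mp (by rw [hdg]; exact hc)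
    obtain ⟨a', ha'⟩ := (hX a).mp (hf i (by rw [hdf, ha, hdY, map_zero]))
    obtain ⟨b', hb'⟩ := (hY (b - f (i + 2) a')).mp (by rw [map_sub, ← hdf, ha', ha, sub_self])
    refine ⟨g (i + 3) b', ?_⟩
    rw [← hdg, hb', map_sub, (hfg (i + 2)).apply_apply_eq_zero, sub_zero]
  · rintro ⟨c', rfl⟩
    obtain ⟨b, rfl⟩ := hg (i + 3) c'
    rw [← hdg, ← hdg, hdY, map_zero]

/-- The segment `H_{i+1}(Z) → H_i(X) → H_i(Y)` of the long exact homology sequence. -/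
lemma exact_kernel_of_exact (i : ℕ) (hZ : Exact (dZ (i + 2)) (dZ (i + 1)))
    (hY : Exact (dY (i + 1)) (dY i)) : Exact (dX (i + 1)) (dX i) := by
  intro a
  constructor
  · intro ha
    obtain ⟨b, hb⟩ := (hY (f (i + 1) a)).mp (by rw [← hdf, ha, map_zero])
    obtain ⟨c', hc'⟩ := (hZ (g (i + 2) b)).mp
      (by rw [← hdg, hb, (hfg (i + 1)).apply_apply_eq_zero])
    obtain ⟨b', rfl⟩ := hg (i + 3) c'
    obtain ⟨a', ha'⟩ := (hfg (i + 2) (b - dY (i + 2) b')).mp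
      (by rw [map_sub, hdg, hc', sub_self])
    exact ⟨a', hf (i + 1) (by rw [hdf, ha', map_sub, hb, hdY, sub_zero])⟩
  · rintro ⟨a', rfl⟩
    exact hf i (by rw [hdf, hdf, hdY, map_zero])

end LongExactSequence

section GradedPiece

variable {Γ : Type*} [Preorder Γ] {ι ι' : Type*}

/-- The component at `v` of the free module `⊕ₜ F(z t)`, as the vectors in `ι → k` supported on
the generators of degree `≤ v`. -/
def gradedPiece (z : ι → Γ) (v : Γ) : Submodule k (ι → k) :=
  Submodule.pi Set.univ fun t => gate k (z t ≤ v)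

variable {k}

lemma mem_gradedPiece {z : ι → Γ} {v : Γ} {f : ι → k} :
    f ∈ gradedPiece k z v ↔ ∀ t, ¬ z t ≤ v → f t = 0 := by
  simp only [gradedPiece, Submodule.mem_pi, Set.mem_univ, true_implies]
  exact forall_congr' fun t => or_iff_not_imp_left

lemma gradedPiece_mono {z : ι → Γ} {u v : Γ} (h : u ≤ v) : gradedPiece k z u ≤ gradedPiece k z v :=
  fun _ hf => mem_gradedPiece.mpr fun t ht => mem_gradedPiece.mp hf t fun hu => ht (hu.trans h)

lemma isEmpty_of_forall_subsingleton_gradedPiece {z : ι → Γ}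
    (h : ∀ v, Subsingleton (gradedPiece k z v)) : IsEmpty ι := by
  classical
  refine ⟨fun t => ?_⟩
  have hmem : Pi.single t 1 ∈ gradedPiece k z (z t) := mem_gradedPiece.mpr fun s hs =>
    Pi.single_eq_of_ne (fun hst => hs (by rw [hst])) 1
  have := congrArg (fun f : gradedPiece k z (z t) => f.1 t) (Subsingleton.elim ⟨_, hmem⟩ 0)
  simp at this

def gradedPieceEquivPi (z : ι → Γ) (v : Γ) :
    (Π t, ↥(gate k (z t ≤ v))) ≃ₗ[k] gradedPiece k z v where
  toFun x := ⟨fun t => x t, fun t _ => (x t).2⟩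
  invFun f t := ⟨f.1 t, f.2 t (Set.mem_univ t)⟩
  map_add' _ _ := rfl
  map_smul' _ _ := rfl
  left_inv _ := rfl
  right_inv _ := rfl

variable [Fintype ι] {z : ι → Γ} {z' : ι' → Γ} {c : Matrix ι' ι k}

lemma mulVec_mem_gradedPiece (hc : ∀ s t, c s t ≠ 0 → z' s ≤ z t) {v : Γ} {f : ι → k}
    (hf : f ∈ gradedPiece k z v) : c *ᵥ f ∈ gradedPiece k z' v := by
  refine mem_gradedPiece.mpr fun s hs => Finset.sum_eq_zero fun t _ => ?_
  by_cases hct : c s t = 0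
  · simp [hct]
  · rw [mem_gradedPiece.mp hf t fun hz => hs ((hc s t hct).trans hz), mul_zero]

def gradedMulVec (c : Matrix ι' ι k) (hc : ∀ s t, c s t ≠ 0 → z' s ≤ z t) (v : Γ) :
    gradedPiece k z v →ₗ[k] gradedPiece k z' v :=
  c.mulVecLin.restrict fun _ => mulVec_mem_gradedPiece hc

end GradedPiece

section LastCoordinate

variable {k} {ι ι' : Type*}

lemma le_snoc_iff {a : Fin (n + 1) → ℤ} {w : Fin n → ℤ} {c : ℤ} :
    a ≤ Fin.snoc w c ↔ Fin.init a ≤ w ∧ a (Fin.last n) ≤ c := by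
  rw [← Fin.insertNth_last', Fin.le_insertNth_iff, and_comm]
  simp only [Fin.succAbove_last]
  rfl

lemma snoc_sub_one_le (w : Fin n → ℤ) (c : ℤ) :
    (Fin.snoc w (c - 1) : Fin (n + 1) → ℤ) ≤ Fin.snoc w c :=
  le_snoc_iff.mpr ⟨by rw [Fin.init_snoc], by rw [Fin.snoc_last]; omega⟩

/-- At the grade `(w, c)`, the quotient by the generators of last coordinate `< c`. -/
def projLast (z : ι → Fin (n + 1) → ℤ) (c : ℤ) (w : Fin n → ℤ) :
    gradedPiece k z (Fin.snoc w c) →ₗ[k]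
      gradedPiece k (fun t : {t // z t (Fin.last n) = c} => Fin.init (z t)) w :=
  (LinearMap.funLeft k k Subtype.val).restrict fun _ hf => mem_gradedPiece.mpr fun t ht =>
    mem_gradedPiece.mp hf t fun hle => ht (le_snoc_iff.mp hle).1

variable (z : ι → Fin (n + 1) → ℤ) (c : ℤ) (w : Fin n → ℤ)

lemma projLast_surjective : Surjective (projLast (k := k) z c w) := by
  classical
  intro g
  refine ⟨⟨fun t => if h : z t (Fin.last n) = c then g.1 ⟨t, h⟩ else 0, ?_⟩, ?_⟩
  · refine mem_gradedPiece.mpr fun t ht => ?_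
    split_ifs with h
    · exact mem_gradedPiece.mp g.2 ⟨t, h⟩ fun hle => ht (le_snoc_iff.mpr ⟨hle, h.le⟩)
    · rfl
  · exact Subtype.ext (funext fun t => dif_pos t.2)

lemma exact_inclusion_projLast :
    Exact (Submodule.inclusion (gradedPiece_mono (snoc_sub_one_le w c)))
      (projLast (k := k) z c w) := by
  intro f
  constructor
  · intro hf
    refine ⟨⟨f.1, mem_gradedPiece.mpr fun t ht => ?_⟩, rfl⟩
    by_cases h : z t (Fin.last n) = c
    · exact congrFun (congrArg Subtype.val hf) ⟨t, h⟩
    · refine mem_gradedPiece.mp f.2 t fun hle => ht (le_snoc_iff.mpr ?_)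
      rw [le_snoc_iff] at hle
      exact ⟨hle.1, by omega⟩
  · rintro ⟨f, rfl⟩
    refine Subtype.ext (funext fun t => mem_gradedPiece.mp f.2 t fun hle => ?_)
    have := (le_snoc_iff.mp hle).2
    have := t.2
    omega

/-- Generators whose last coordinate differs from `c` cannot contribute: a matrix entry linking
them to a generator of last coordinate `c` forces the last coordinate above `c`, while being
nonzero at `(w, c)` forces it below. -/
lemma projLast_gradedMulVec [Fintype ι] (z' : ι' → Fin (n + 1) → ℤ) (a : Matrix ι' ι k)
    (ha : ∀ s t, a s t ≠ 0 → z' s ≤ z t) (f : gradedPiece k z (Fin.snoc w c)) :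
    projLast z' c w (gradedMulVec a ha (Fin.snoc w c) f) =
      gradedMulVec (a.submatrix Subtype.val Subtype.val)
        (fun s t h j => ha s.1 t.1 h (Fin.castSucc j)) w (projLast z c w f) := by
  classical
  refine Subtype.ext (funext fun s => ?_)
  change ∑ t, a s t * f.1 t = ∑ t : {t // z t (Fin.last n) = c}, a s t * f.1 t
  rw [← Finset.sum_subtype (Finset.univ.filter fun t => z t (Fin.last n) = c) (by simp)
    (fun t => a s t * f.1 t), Finset.sum_filter_of_ne]
  intro t _ hne
  have h1 : z' s (Fin.last n) ≤ z t (Fin.last n) := ha s t (left_ne_zero_of_mul hne) _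
  have h2 : z t ≤ Fin.snoc w c :=
    by_contra fun h => right_ne_zero_of_mul hne (mem_gradedPiece.mp f.2 t h)
  have := (le_snoc_iff.mp h2).2
  have := s.2
  omega

end LastCoordinate

/-- A complex `⋯ → F₂ → F₁ → F₀` of free modules of finite rank over a poset `Γ`, with
`Fᵢ = ⊕_{t : ι i} F(deg i t)` and differentials given by matrices. -/
structure FreeComplex (Γ : Type*) [Preorder Γ] where
  ι : ℕ → Type
  [fintype : ∀ i, Fintype (ι i)]
  deg : ∀ i, ι i → Γ
  mat : ∀ i, Matrix (ι i) (ι (i + 1)) k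
  deg_le_of_mat_ne_zero : ∀ i s t, mat i s t ≠ 0 → deg i s ≤ deg (i + 1) t
  d_comp_d : ∀ i v (x : gradedPiece k (deg (i + 2)) v),
    gradedMulVec (mat i) (deg_le_of_mat_ne_zero i) v
      (gradedMulVec (mat (i + 1)) (deg_le_of_mat_ne_zero (i + 1)) v x) = 0

namespace FreeComplex

attribute [instance] fintype

variable {k} {Γ : Type*} [Preorder Γ]

section Basic

variable (C : FreeComplex k Γ)

def d (i : ℕ) (v : Γ) : gradedPiece k (C.deg (i + 1)) v →ₗ[k] gradedPiece k (C.deg i) v :=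
  gradedMulVec (C.mat i) (C.deg_le_of_mat_ne_zero i) v

def ExactAt (i : ℕ) (v : Γ) : Prop :=
  Exact (C.d (i + 1) v) (C.d i v)

def homologySupport (i : ℕ) : Set Γ :=
  {v | ¬ C.ExactAt i v}

lemma exactAt_of_isEmpty {i : ℕ} [IsEmpty (C.ι (i + 1))] (v : Γ) : C.ExactAt i v := by
  intro x
  rw [Subsingleton.elim x 0, map_zero]
  exact ⟨fun _ => ⟨0, map_zero _⟩, fun _ => rfl⟩

end Basic

section RestrictLast

variable (C : FreeComplex k (Fin (n + 1) → ℤ)) (c : ℤ)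

/-- At each `w`, the quotient of `C` at `(w, c)` by `C` at `(w, c - 1)`: the free complex on the
generators of last coordinate `c`. -/
def restrictLast : FreeComplex k (Fin n → ℤ) where
  ι i := {t : C.ι i // C.deg i t (Fin.last n) = c}
  deg i t := Fin.init (C.deg i t)
  mat i := (C.mat i).submatrix Subtype.val Subtype.val
  deg_le_of_mat_ne_zero i s t h j := C.deg_le_of_mat_ne_zero i s t h (Fin.castSucc j)
  d_comp_d i w x := by
    obtain ⟨y, rfl⟩ := projLast_surjective (C.deg (i + 2)) c w x
    refine (congrArg _
      (projLast_gradedMulVec _ c w _ _ (C.deg_le_of_mat_ne_zero (i + 1)) y).symm).trans ?_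
    refine (projLast_gradedMulVec _ c w _ _ (C.deg_le_of_mat_ne_zero i) _).symm.trans ?_
    rw [C.d_comp_d, map_zero]

lemma projLast_d (i : ℕ) (w : Fin n → ℤ) (x : gradedPiece k (C.deg (i + 1)) (Fin.snoc w c)) :
    projLast (C.deg i) c w (C.d i (Fin.snoc w c) x) =
      (C.restrictLast c).d i w (projLast (C.deg (i + 1)) c w x) :=
  projLast_gradedMulVec _ c w _ _ _ x

lemma restrictLast_exactAt_succ {i : ℕ} {w : Fin n → ℤ} (hc : C.ExactAt (i + 1) (Fin.snoc w c))
    (hc₁ : C.ExactAt i (Fin.snoc w (c - 1))) : (C.restrictLast c).ExactAt (i + 1) w :=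
  exact_quotient_of_exact (X := fun j => gradedPiece k (C.deg j) (Fin.snoc w (c - 1)))
    (Y := fun j => gradedPiece k (C.deg j) (Fin.snoc w c))
    (Z := fun j => gradedPiece k ((C.restrictLast c).deg j) w) (fun j => C.d j (Fin.snoc w (c - 1)))
    (fun j => C.d j (Fin.snoc w c)) (fun j => (C.restrictLast c).d j w)
    (fun j => Submodule.inclusion (gradedPiece_mono (z := C.deg j) (snoc_sub_one_le w c)))
    (fun j => projLast (C.deg j) c w) (fun _ => Submodule.inclusion_injective _)
    (fun _ => projLast_surjective _ c w) (fun _ => exact_inclusion_projLast _ c w)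
    (fun _ _ => rfl) (C.projLast_d c · w) (fun j => C.d_comp_d j _) i hc hc₁

lemma exactAt_of_restrictLast_exactAt_succ {i : ℕ} {w : Fin n → ℤ}
    (hR : (C.restrictLast c).ExactAt (i + 1) w) (hc : C.ExactAt i (Fin.snoc w c)) :
    C.ExactAt i (Fin.snoc w (c - 1)) :=
  exact_kernel_of_exact (X := fun j => gradedPiece k (C.deg j) (Fin.snoc w (c - 1)))
    (Y := fun j => gradedPiece k (C.deg j) (Fin.snoc w c))
    (Z := fun j => gradedPiece k ((C.restrictLast c).deg j) w) (fun j => C.d j (Fin.snoc w (c - 1)))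
    (fun j => C.d j (Fin.snoc w c)) (fun j => (C.restrictLast c).d j w)
    (fun j => Submodule.inclusion (gradedPiece_mono (z := C.deg j) (snoc_sub_one_le w c)))
    (fun j => projLast (C.deg j) c w) (fun _ => Submodule.inclusion_injective _)
    (fun _ => projLast_surjective _ c w) (fun _ => exact_inclusion_projLast _ c w)
    (fun _ _ => rfl) (C.projLast_d c · w) (fun j => C.d_comp_d j _) i hR hc

end RestrictLast

theorem add_lt_of_homologySupport (C : FreeComplex k (Fin n → ℤ)) {q m : ℕ}
    (hlen : ∀ i, m < i → IsEmpty (C.ι i)) (hexact : ∀ i, q < i → ∀ v, C.ExactAt i v)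
    (hfin : (C.homologySupport q).Finite) (hne : (C.homologySupport q).Nonempty) :
    q + n < m := by
  induction n generalizing q with
  | zero =>
    obtain ⟨v, hv⟩ := hne
    by_contra! h
    have := hlen (q + 1) (by omega)
    exact hv (C.exactAt_of_isEmpty v)
  | succ n ih =>
    obtain ⟨v₀, hv₀, hmax⟩ := hfin.exists_maximalFor (fun v => v (Fin.last n)) _ hne
    set c := v₀ (Fin.last n) + 1 with hc
    have hexact_c : ∀ w, C.ExactAt q (Fin.snoc w c) := fun w => by
      by_contra h
      have := hmax h (by simp [hc])
      simp [hc] at this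
    suffices q + 1 + n < m by omega
    refine ih (C.restrictLast c) (fun i hi => ⟨fun t => (hlen i hi).false t.1⟩) ?_ ?_ ?_
    · rintro (_ | i) hi w
      · omega
      · exact C.restrictLast_exactAt_succ c (hexact _ (by omega) _) (hexact _ (by omega) _)
    · refine (hfin.preimage (Fin.snoc_left_injective (α := fun _ => ℤ) (c - 1)).injOn).subset
        fun w hw hA => hw (C.restrictLast_exactAt_succ c (hexact _ (by omega) _) hA)
    · refine ⟨Fin.init v₀, fun hR => hv₀ ?_⟩
      have := C.exactAt_of_restrictLast_exactAt_succ c hR (hexact_c _)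
      rwa [show c - 1 = v₀ (Fin.last n) by omega, Fin.snoc_init_self] at this

/-- Prepending the zero module turns the cokernel of `C.d 0` into homology in degree `0`. -/
def consZero (C : FreeComplex k Γ) : FreeComplex k Γ where
  ι := fun | 0 => Empty | i + 1 => C.ι i
  fintype := fun | 0 => inferInstanceAs (Fintype Empty) | i + 1 => C.fintype i
  deg := fun | 0 => Empty.elim | i + 1 => C.deg i
  mat := fun | 0 => 0 | i + 1 => C.mat i
  deg_le_of_mat_ne_zero := fun | 0 => fun s => s.elim | i + 1 => C.deg_le_of_mat_ne_zero i
  d_comp_d := fun | 0 => fun _ _ => Subsingleton.elim _ _ | i + 1 => C.d_comp_d i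

lemma consZero_exactAt_zero_iff (C : FreeComplex k Γ) (v : Γ) :
    C.consZero.ExactAt 0 v ↔ Surjective (C.d 0 v) := by
  have : IsEmpty (C.consZero.ι 0) := inferInstanceAs (IsEmpty Empty)
  rw [ExactAt, Subsingleton.elim (C.consZero.d 0 v) 0]
  exact LinearMap.exact_zero_iff_surjective _ _

theorem le_of_finite_coker (C : FreeComplex k (Fin n → ℤ)) {m : ℕ}
    (hlen : ∀ i, m < i → IsEmpty (C.ι i)) (hexact : ∀ i v, C.ExactAt i v)
    (hfin : {v | ¬ Surjective (C.d 0 v)}.Finite) (hne : {v | ¬ Surjective (C.d 0 v)}.Nonempty) :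
    n ≤ m := by
  have hsupp : C.consZero.homologySupport 0 = {v | ¬ Surjective (C.d 0 v)} :=
    Set.ext fun v => not_congr (C.consZero_exactAt_zero_iff v)
  have := C.consZero.add_lt_of_homologySupport (q := 0) (m := m + 1)
    (fun | 0, h => absurd h (by omega) | i + 1, h => hlen i (by omega))
    (fun | 0, h => absurd h (by omega) | i + 1, _ => hexact i) (hsupp ▸ hfin) (hsupp ▸ hne)
  omega

end FreeComplex

section FreeModules

abbrev freeSum {J : Type} [Finite J] (a : J → Fin n → ℤ) : (Fin n → ℤ) ⥤ ModuleCat k :=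
  ⨁ fun t => freeF k n (a t)

variable {k}

def freeGen (a : Fin n → ℤ) : (freeF k n a).obj a := ⟨1, Or.inl fun _ => le_rfl⟩

def freeHomScalar {a b : Fin n → ℤ} (η : freeF k n a ⟶ freeF k n b) : k :=
  (η.app a (freeGen a)).1

lemma le_of_freeHomScalar_ne_zero {a b : Fin n → ℤ} {η : freeF k n a ⟶ freeF k n b}
    (h : freeHomScalar η ≠ 0) : b ≤ a :=
  (η.app a (freeGen a)).2.resolve_right h

/-- Every morphism `F(a) ⟶ F(b)` is multiplication by a scalar, by naturality along `a ≤ v`. -/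
lemma val_app_freeF {a b : Fin n → ℤ} (η : freeF k n a ⟶ freeF k n b) (v : Fin n → ℤ)
    (x : (freeF k n a).obj v) : (η.app v x).1 = freeHomScalar η * x.1 := by
  by_cases hv : a ≤ v
  · have hx : x = (freeF k n a).map (homOfLE hv) (x.1 • freeGen a) :=
      Subtype.ext (mul_one x.1).symm
    conv_lhs => rw [hx, NatTrans.naturality_apply, map_smul]
    exact mul_comm x.1 (freeHomScalar η)
  · obtain rfl : x = 0 := Subtype.ext (x.2.resolve_left hv)
    rw [map_zero]
    exact (mul_zero _).symm

variable {I J : Type} [Fintype I] [Fintype J]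

def freeSumObjEquiv (a : J → Fin n → ℤ) (v : Fin n → ℤ) :
    (freeSum k a).obj v ≃ₗ[k] gradedPiece k a v :=
  ((((evaluation _ _).obj v).mapBiproduct _ ≪≫ ModuleCat.biproductIsoPi _).toLinearEquiv).trans
    (gradedPieceEquivPi a v)

lemma freeSumObjEquiv_apply (a : J → Fin n → ℤ) (v : Fin n → ℤ) (x : (freeSum k a).obj v)
    (t : J) : (freeSumObjEquiv a v x : J → k) t =
      ((biproduct.π (fun t => freeF k n (a t)) t).app v x).1 := by
  have h := ModuleCat.biproductIsoPi_inv_comp_π_apply _ t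
    ((ModuleCat.biproductIsoPi _).hom
      ((((evaluation _ _).obj v).mapBiproduct fun t => freeF k n (a t)).hom x))
  rw [Iso.hom_inv_id_apply, Functor.mapBiproduct_hom, ← ConcreteCategory.comp_apply] at h
  erw [biproduct.lift_π] at h
  exact congrArg Subtype.val h.symm

def freeMatrix {a : I → Fin n → ℤ} {b : J → Fin n → ℤ} (φ : freeSum k b ⟶ freeSum k a) :
    Matrix I J k :=
  fun s t => freeHomScalar
    (biproduct.ι (fun t => freeF k n (b t)) t ≫ φ ≫ biproduct.π (fun s => freeF k n (a s)) s)

lemma le_of_freeMatrix_ne_zero {a : I → Fin n → ℤ} {b : J → Fin n → ℤ}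
    {φ : freeSum k b ⟶ freeSum k a} {s : I} {t : J} (h : freeMatrix φ s t ≠ 0) : a s ≤ b t :=
  le_of_freeHomScalar_ne_zero h

lemma biproduct_π_app_app_eq_sum {a : I → Fin n → ℤ} {b : J → Fin n → ℤ}
    (φ : freeSum k b ⟶ freeSum k a) (s : I) (v : Fin n → ℤ) (x : (freeSum k b).obj v) :
    (biproduct.π (fun s => freeF k n (a s)) s).app v (φ.app v x) =
      ∑ t, (biproduct.ι (fun t => freeF k n (b t)) t ≫ φ ≫ biproduct.π _ s).app v
        ((biproduct.π (fun t => freeF k n (b t)) t).app v x) := by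
  have h : φ ≫ biproduct.π _ s =
      ∑ t, biproduct.π _ t ≫ biproduct.ι (fun t => freeF k n (b t)) t ≫ φ ≫ biproduct.π _ s := by
    simp_rw [← Category.assoc, ← Preadditive.sum_comp, biproduct.total, Category.id_comp]
  simpa [NatTrans.app_sum] using congrArg (fun ψ => ψ.app v x) h

lemma freeSumObjEquiv_app {a : I → Fin n → ℤ} {b : J → Fin n → ℤ}
    (φ : freeSum k b ⟶ freeSum k a) (v : Fin n → ℤ) (x : (freeSum k b).obj v) :
    freeSumObjEquiv a v (φ.app v x) =
      gradedMulVec (freeMatrix φ) (fun _ _ => le_of_freeMatrix_ne_zero) v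
        (freeSumObjEquiv b v x) := by
  refine Subtype.ext (funext fun s => ?_)
  change _ = ∑ t, freeMatrix φ s t * (freeSumObjEquiv b v x : J → k) t
  rw [freeSumObjEquiv_apply, biproduct_π_app_app_eq_sum]
  refine (AddSubmonoidClass.coe_finsetSum _ _).trans (Finset.sum_congr rfl fun t _ => ?_)
  rw [val_app_freeF, freeSumObjEquiv_apply]
  rfl

lemma isEmpty_of_iso_freeSum {G : (Fin n → ℤ) ⥤ ModuleCat k} {a : J → Fin n → ℤ}
    (e : G ≅ freeSum k a) (h : ∀ v, Subsingleton (G.obj v)) : IsEmpty J :=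
  isEmpty_of_forall_subsingleton_gradedPiece fun v =>
    ((e.app v).toLinearEquiv.trans (freeSumObjEquiv a v)).symm.subsingleton

end FreeModules

section Resolution

variable {k} {F : ℕ → (Fin n → ℤ) ⥤ ModuleCat k} (d : ∀ i, F (i + 1) ⟶ F i)
  (hd : ∀ i v x, (d i).app v ((d (i + 1)).app v x) = 0) {r : ℕ → ℕ}
  {z : ∀ i, Fin (r i) → Fin n → ℤ} (e : ∀ i, F i ≅ freeSum k (z i))

def resolutionEquiv (i : ℕ) (v : Fin n → ℤ) : (F i).obj v ≃ₗ[k] gradedPiece k (z i) v :=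
  ((e i).app v).toLinearEquiv.trans (freeSumObjEquiv (z i) v)

lemma resolutionEquiv_app (i : ℕ) (v : Fin n → ℤ) (x : (F (i + 1)).obj v) :
    resolutionEquiv e i v ((d i).app v x) =
      gradedMulVec (freeMatrix ((e (i + 1)).inv ≫ d i ≫ (e i).hom))
        (fun _ _ => le_of_freeMatrix_ne_zero) v (resolutionEquiv e (i + 1) v x) := by
  have h : (e i).hom.app v ((d i).app v x) =
      ((e (i + 1)).inv ≫ d i ≫ (e i).hom).app v ((e (i + 1)).hom.app v x) := by
    simp
  exact (congrArg (freeSumObjEquiv (z i) v) h).trans (freeSumObjEquiv_app _ v _)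

def FreeComplex.ofResolution : FreeComplex k (Fin n → ℤ) where
  ι i := Fin (r i)
  deg := z
  mat i := freeMatrix ((e (i + 1)).inv ≫ d i ≫ (e i).hom)
  deg_le_of_mat_ne_zero _ _ _ := le_of_freeMatrix_ne_zero
  d_comp_d i v x := by
    obtain ⟨y, rfl⟩ := (resolutionEquiv e (i + 2) v).surjective x
    rw [← resolutionEquiv_app, ← resolutionEquiv_app, hd, map_zero]

lemma FreeComplex.ofResolution_exactAt_iff (i : ℕ) (v : Fin n → ℤ) :
    (FreeComplex.ofResolution d hd e).ExactAt i v ↔ Exact ((d (i + 1)).app v) ((d i).app v) :=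
  Exact.iff_of_ladder_linearEquiv (e₁ := resolutionEquiv e (i + 2) v)
    (e₂ := resolutionEquiv e (i + 1) v) (e₃ := resolutionEquiv e i v)
    (LinearMap.ext fun x => (resolutionEquiv_app d e (i + 1) v x).symm)
    (LinearMap.ext fun x => (resolutionEquiv_app d e i v x).symm)

lemma FreeComplex.ofResolution_d_zero_surjective_iff (v : Fin n → ℤ) :
    Surjective ((FreeComplex.ofResolution d hd e).d 0 v) ↔ Surjective ((d 0).app v) := by
  have h : (FreeComplex.ofResolution d hd e).d 0 v ∘ resolutionEquiv e 1 v =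
      resolutionEquiv e 0 v ∘ (d 0).app v :=
    funext fun x => (resolutionEquiv_app d e 0 v x).symm
  exact (EquivLike.surjective_comp (resolutionEquiv e 1 v) _).symm.trans
    ((iff_of_eq (congrArg Surjective h)).trans (EquivLike.comp_surjective _ _))

end Resolution

end

end PersistenceModule

open PersistenceModule in
/-- Let `M` be a nonzero persistence module over `ℤⁿ` of finite total
dimension.  Then there is no exact sequence `0 → F_m → ⋯ → F_1 → F_0 → M → 0` with
`m < n` in which every `F_i` is free of finite rank. -/
theorem statement15 (M : (Fin n → ℤ) ⥤ ModuleCat k)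
    (hM0 : ¬ ∀ z : Fin n → ℤ, Subsingleton (M.obj z))
    (hMfd : (Cardinal.sum fun z : Fin n → ℤ => Module.rank k (M.obj z)) < Cardinal.aleph0) :
    ¬ ∃ (m : ℕ), m < n ∧
      ∃ (F : ℕ → ((Fin n → ℤ) ⥤ ModuleCat k)) (d : ∀ i : ℕ, F (i+1) ⟶ F i) (ε : F 0 ⟶ M),
        (∀ i, IsFiniteRankFree k n (F i)) ∧
        (∀ i, m < i → ∀ z : Fin n → ℤ, Subsingleton ((F i).obj z)) ∧
        (∀ z : Fin n → ℤ, Function.Surjective (ε.app z)) ∧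
        (∀ z : Fin n → ℤ, Function.Exact ((d 0).app z) (ε.app z)) ∧
        (∀ (i : ℕ) (z : Fin n → ℤ), Function.Exact ((d (i+1)).app z) ((d i).app z)) := by
  rintro ⟨m, hmn, F, d, ε, hfree, hzero, hsurj, hex0, hexS⟩
  choose r z he using hfree
  let e i := (he i).some
  let C := FreeComplex.ofResolution d (fun i v => (hexS i v).apply_apply_eq_zero) e
  have hcoker : {v | ¬ Function.Surjective (C.d 0 v)} = {v | Module.rank k (M.obj v) ≠ 0} :=
    Set.ext fun v => not_congr <| (FreeComplex.ofResolution_d_zero_surjective_iff _ _ _ v).trans <|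
      ((hex0 v).surjective_iff_subsingleton (hsurj v)).trans rank_zero_iff.symm
  have hne : {v | Module.rank k (M.obj v) ≠ 0}.Nonempty := by
    obtain ⟨v, hv⟩ := not_forall.mp hM0
    exact ⟨v, fun h => hv (rank_zero_iff.mp h)⟩
  have := C.le_of_finite_coker (m := m)
    (fun i hi => isEmpty_of_iso_freeSum (e i) (hzero i hi))
    (fun i v => (FreeComplex.ofResolution_exactAt_iff _ _ _ i v).mpr (hexS i v))
    (hcoker ▸ Cardinal.finite_setOf_ne_zero_of_sum_lt_aleph0 hMfd) (hcoker ▸ hne)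
  omega
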